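/- arXiv:2212.11015 — 3 statements merged into one kernel-verified Lean document; each statement's English description precedes it below -/
import Mathlib

section
/- For the function g(F) = (10F² − 2F + 1)/(8F² − 4F + 5), if 1/2 < F < 1 then F < g(F) < 1. -/
noncomputable def g (F : ℝ) : ℝ := (10 * F ^ 2 - 2 * F + 1) / (8 * F ^ 2 - 4 * F + 5)

theorem recurrence_fidelity_increase (F : ℝ) (h1 : 1 / 2 < F) (h2 : F < 1) :
    F < g F ∧ g F < 1 := by
  have hd : 0 < 8 * F ^ 2 - 4 * F + 5 := by nlinarith
  constructor
  · rw [g, lt_div_iff₀ hd]; nlinarith [sq_nonneg (F - 1), sq_nonneg (2*F - 1)]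
  · rw [g, div_lt_one hd]; nlinarith
end

section
/- For the function g(F) = (10F² − 2F + 1)/(8F² − 4F + 5), the iterated sequence F₀ = F, F_{n+1} = g(F_n) with initial value 1/2 < F < 1 converges to 1. -/
lemma denom_pos (x : ℝ) : 0 < 8 * x ^ 2 - 4 * x + 5 := by nlinarith [sq_nonneg (4 * x - 1)]

lemma g_mem {x : ℝ} (h1 : 1 / 2 < x) (h2 : x < 1) : 1 / 2 < g x ∧ g x < 1 := by
  have hd := denom_pos x
  constructor
  · rw [g, lt_div_iff₀ hd]; nlinarith
  · rw [g, div_lt_one hd]; nlinarith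

lemma g_gt {x : ℝ} (h1 : 1 / 2 < x) (h2 : x < 1) : x < g x := by
  have hd := denom_pos x
  rw [g, lt_div_iff₀ hd]
  nlinarith [mul_pos (mul_pos (sub_pos.2 h2) (by linarith : (0:ℝ) < 2 * x - 1))
    (by linarith : (0:ℝ) < 4 * x - 1)]

theorem recurrence_iterates_tendsto_one (F : ℝ) (h1 : 1 / 2 < F) (h2 : F < 1) :
    Filter.Tendsto (fun n : ℕ => g^[n] F) Filter.atTop (nhds 1) := by
  set a : ℕ → ℝ := fun n => g^[n] F with ha
  have hmem : ∀ n, 1 / 2 < a n ∧ a n < 1 := by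
    intro n; induction n with
    | zero => exact ⟨h1, h2⟩
    | succ n ih =>
      simp only [ha, Function.iterate_succ_apply']
      exact g_mem ih.1 ih.2
  have hmono : Monotone a := monotone_nat_of_le_succ (fun n => by
    have := g_gt (hmem n).1 (hmem n).2
    simpa [ha, Function.iterate_succ_apply'] using this.le)
  have hbdd : BddAbove (Set.range a) := ⟨1, by rintro _ ⟨n, rfl⟩; exact (hmem n).2.le⟩
  have htend := tendsto_atTop_ciSup hmono hbdd
  set L := ⨆ n, a n with hL
  have hL1 : L ≤ 1 := ciSup_le fun n => (hmem n).2.le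
  have hLgt : 1 / 2 < L := lt_of_lt_of_le h1 (le_ciSup hbdd 0)
  have hd := denom_pos L
  have hcont : ContinuousAt g L := by
    have hc : ContinuousAt (fun x : ℝ => (10 * x ^ 2 - 2 * x + 1) / (8 * x ^ 2 - 4 * x + 5)) L :=
      ContinuousAt.div (by fun_prop) (by fun_prop) hd.ne'
    exact hc
  have h2' : Filter.Tendsto (fun n => a (n + 1)) Filter.atTop (nhds L) :=
    htend.comp (Filter.tendsto_add_atTop_nat 1)
  have h3 : Filter.Tendsto (fun n => g (a n)) Filter.atTop (nhds (g L)) :=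
    hcont.tendsto.comp htend
  have heq : g L = L := by
    have hfe : (fun n => a (n + 1)) = fun n => g (a n) := by
      funext n; simp [ha, Function.iterate_succ_apply']
    rw [hfe] at h2'
    exact tendsto_nhds_unique h3 h2'
  have hnum : 10 * L ^ 2 - 2 * L + 1 = L * (8 * L ^ 2 - 4 * L + 5) := by
    rw [g, div_eq_iff hd.ne'] at heq
    linarith [heq]
  have hL1' : L = 1 := by
    by_contra h
    have hlt : L < 1 := lt_of_le_of_ne hL1 h
    nlinarith [mul_pos (mul_pos (sub_pos.2 hlt) (by linarith : (0:ℝ) < 2 * L - 1))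
      (by linarith : (0:ℝ) < 4 * L - 1)]
  rw [hL1'] at htend
  exact htend
end

section
/- No local filter can map a finite tensor power of the state ρ_ε = (1−ε) σ' + ε 𝟙/d exactly onto the pure entangled state σ': there exist no operators A, B and integer N with (A ⊗ B) ρ_ε^{⊗N} (A ⊗ B)† = σ', for 0 < ε < 1. -/
open Matrix Kronecker
open scoped ComplexOrder

/-- Projector onto a vector. -/
noncomputable def proj {n : Type*} (v : n → ℂ) : Matrix n n ℂ :=
  Matrix.of fun i j => v i * star (v j)

/-- `N`-fold tensor power of a matrix, on the index type `Fin N → n`. -/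
noncomputable def tensorPow {n : Type*} [Fintype n] (ρ : Matrix n n ℂ) (N : ℕ) :
    Matrix (Fin N → n) (Fin N → n) ℂ :=
  Matrix.of fun f g => ∏ k, ρ (f k) (g k)

/-- Reindexing `(Fin N → A × B) ≃ (Fin N → A) × (Fin N → B)`. -/
def splitIdx (A B : Type*) (N : ℕ) :
    (Fin N → A × B) ≃ (Fin N → A) × (Fin N → B) :=
  Equiv.arrowProdEquivProdArrow (Fin N) (fun _ => A) (fun _ => B)

/-!
The noisy state dominates a multiple of the identity, `ρ_ε ≥ c • 1` with `c = ε / d > 0`, and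
this survives tensor powers, reindexing and conjugation: `σ' = F ρ_ε^{⊗N} F† ≥ c^N • F F†` for
the local filter `F = A ⊗ B`. A positive semidefinite matrix dominated by a rank-one projector is
a multiple of it, so `σ'` is proportional to `F F† = (A A†) ⊗ (B B†)` (if `F F† = 0`, then
`σ' = 0` as well). Hence `ψ` would be a product vector.
-/

open scoped MatrixOrder

namespace Matrix

variable {𝕜 : Type*} [RCLike 𝕜] {l m n : Type*}

lemma kronecker_mono [Fintype m] [Fintype n] {X X' : Matrix m m 𝕜} {Y Y' : Matrix n n 𝕜}
    (hX : 0 ≤ X) (hY : 0 ≤ Y) (hXX' : X ≤ X') (hYY' : Y ≤ Y') : X ⊗ₖ Y ≤ X' ⊗ₖ Y' := by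
  have hsplit : X' ⊗ₖ Y' - X ⊗ₖ Y = (X' - X) ⊗ₖ Y' + X ⊗ₖ (Y' - Y) := by
    ext ⟨i, j⟩ ⟨i', j'⟩
    simp only [sub_apply, add_apply, kroneckerMap_apply]
    ring
  rw [le_iff, hsplit]
  exact ((le_iff.mp hXX').kronecker (hY.trans hYY').posSemidef).add
    (hX.posSemidef.kronecker (le_iff.mp hYY'))

lemma submatrix_mono (e : l → m) {X Y : Matrix m m 𝕜} (h : X ≤ Y) :
    X.submatrix e e ≤ Y.submatrix e e :=
  (le_iff.mp h).submatrix e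

lemma mul_mul_conjTranspose_mono [Fintype l] [Fintype m] (C : Matrix l m 𝕜) {X Y : Matrix m m 𝕜}
    (h : X ≤ Y) : C * X * Cᴴ ≤ C * Y * Cᴴ := by
  rw [le_iff, ← Matrix.sub_mul, ← Matrix.mul_sub]
  exact (le_iff.mp h).mul_mul_conjTranspose_same C

lemma smul_one_le_submatrix [Fintype m] [DecidableEq l] [DecidableEq m] (e : l ≃ m) {c : 𝕜}
    {X : Matrix m m 𝕜} (h : c • 1 ≤ X) : c • 1 ≤ X.submatrix e e := by
  have hsub : (c • 1 : Matrix m m 𝕜).submatrix e e = c • 1 := by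
    rw [submatrix_smul, Pi.smul_apply, Pi.smul_apply, submatrix_one_equiv]
  simpa only [hsub] using submatrix_mono e h

end Matrix

section TensorPow

variable {n : Type*} [Fintype n]

lemma tensorPow_succ (M : Matrix n n ℂ) (N : ℕ) :
    tensorPow M (N + 1) = (M ⊗ₖ tensorPow M N).submatrix
      (fun f => (f 0, Fin.tail f)) (fun f => (f 0, Fin.tail f)) := by
  ext f g
  simp [tensorPow, Fin.prod_univ_succ, Fin.tail]

variable [DecidableEq n]

lemma tensorPow_zero (M : Matrix n n ℂ) : tensorPow M 0 = 1 := by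
  ext f g
  obtain rfl := Subsingleton.elim f g
  simp [tensorPow]

lemma tensorPow_nonneg {M : Matrix n n ℂ} (hM : 0 ≤ M) (N : ℕ) : 0 ≤ tensorPow M N := by
  induction N with
  | zero => exact (tensorPow_zero M).symm ▸ PosSemidef.one.nonneg
  | succ N ih =>
    rw [tensorPow_succ]
    exact (hM.posSemidef.kronecker ih.posSemidef).submatrix _ |>.nonneg

lemma tensorPow_mono {M M' : Matrix n n ℂ} (hM' : 0 ≤ M') (h : M' ≤ M) (N : ℕ) :
    tensorPow M' N ≤ tensorPow M N := by
  induction N with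
  | zero => rw [tensorPow_zero, tensorPow_zero]
  | succ N ih =>
    rw [tensorPow_succ, tensorPow_succ]
    exact submatrix_mono _ (kronecker_mono hM' (tensorPow_nonneg hM' N) h ih)

lemma tensorPow_smul_one (c : ℂ) (N : ℕ) :
    tensorPow (c • (1 : Matrix n n ℂ)) N = c ^ N • (1 : Matrix (Fin N → n) (Fin N → n) ℂ) := by
  ext f g
  rcases eq_or_ne f g with rfl | hfg
  · simp [tensorPow]
  · obtain ⟨k, hk⟩ := Function.ne_iff.mp hfg
    simp [tensorPow, one_apply_ne hfg, Finset.prod_eq_zero (Finset.mem_univ k), hk]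

lemma smul_one_le_tensorPow {c : ℂ} (hc : 0 ≤ c) {M : Matrix n n ℂ} (h : c • 1 ≤ M) (N : ℕ) :
    c ^ N • 1 ≤ tensorPow M N := by
  rw [← tensorPow_smul_one]
  exact tensorPow_mono (PosSemidef.one.smul hc).nonneg h N

end TensorPow

section Proj

lemma proj_eq_vecMulVec {n : Type*} (v : n → ℂ) : proj v = vecMulVec v (star v) := rfl

variable {n : Type*} [Fintype n]

lemma proj_nonneg (v : n → ℂ) : 0 ≤ proj v :=
  (posSemidef_vecMulVec_self_star v).nonneg

lemma proj_mul_mul_proj (v : n → ℂ) (M : Matrix n n ℂ) :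
    proj v * M * proj v = (star v ⬝ᵥ M *ᵥ v) • proj v := by
  rw [proj_eq_vecMulVec, vecMulVec_mul, vecMulVec_mul_vecMulVec, ← dotProduct_mulVec]
  ext i j
  simp only [vecMulVec_apply, Matrix.smul_apply, Pi.smul_apply, smul_eq_mul]
  ring

lemma mulVec_eq_zero_of_le_proj {v : n → ℂ} {M : Matrix n n ℂ} (hM : 0 ≤ M) (hMv : M ≤ proj v)
    {x : n → ℂ} (hx : star v ⬝ᵥ x = 0) : M *ᵥ x = 0 := by
  have hproj : star x ⬝ᵥ proj v *ᵥ x = 0 := by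
    rw [proj_eq_vecMulVec, vecMulVec_mulVec]
    simp [hx]
  have hle : star x ⬝ᵥ M *ᵥ x ≤ 0 := by
    simpa [sub_mulVec, dotProduct_sub, hproj] using (le_iff.mp hMv).dotProduct_mulVec_nonneg x
  exact (hM.posSemidef.dotProduct_mulVec_zero_iff x).mp
    (le_antisymm hle (hM.posSemidef.dotProduct_mulVec_nonneg x))

lemma star_dotProduct_self_eq_sum_norm_sq (v : n → ℂ) :
    star v ⬝ᵥ v = ((∑ i, ‖v i‖ ^ 2 : ℝ) : ℂ) := by
  push_cast
  simp [dotProduct, Complex.conj_mul']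

variable [DecidableEq n]

lemma mul_proj_eq_self_of_le_proj {v : n → ℂ} (hv : star v ⬝ᵥ v = 1) {M : Matrix n n ℂ}
    (hM : 0 ≤ M) (hMv : M ≤ proj v) : M * proj v = M := by
  -- `M` annihilates `v^⊥`, so `M x = M ((v† x) v) = M (proj v x)`.
  refine ext_of_mulVec_single fun k => ?_
  set x : n → ℂ := Pi.single k 1
  have hperp : star v ⬝ᵥ (x - (star v ⬝ᵥ x) • v) = 0 := by
    rw [dotProduct_sub, dotProduct_smul, hv, smul_eq_mul, mul_one, sub_self]
  have := mulVec_eq_zero_of_le_proj hM hMv hperp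
  rw [mulVec_sub, sub_eq_zero] at this
  rw [← mulVec_mulVec, proj_eq_vecMulVec, vecMulVec_mulVec, this]
  simp

lemma eq_smul_proj_of_le_proj {v : n → ℂ} (hv : star v ⬝ᵥ v = 1) {M : Matrix n n ℂ}
    (hM : 0 ≤ M) (hMv : M ≤ proj v) : M = (star v ⬝ᵥ M *ᵥ v) • proj v := by
  have hright := mul_proj_eq_self_of_le_proj hv hM hMv
  have hleft : proj v * M = M := by
    simpa [conjTranspose_mul, hM.posSemidef.isHermitian.eq,
      (proj_nonneg v).posSemidef.isHermitian.eq] using congrArg conjTranspose hright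
  rw [← proj_mul_mul_proj, Matrix.mul_assoc, hright, hleft]

lemma exists_proj_eq_smul_mul_conjTranspose {m : Type*} [Fintype m] [DecidableEq m]
    {v : n → ℂ} (hv : star v ⬝ᵥ v = 1) {c : ℂ} (hc : 0 < c) {C : Matrix n m ℂ}
    {R : Matrix m m ℂ} (hR : c • 1 ≤ R) (hCR : C * R * Cᴴ = proj v) :
    ∃ t : ℂ, proj v = t • (C * Cᴴ) := by
  have hle : c • (C * Cᴴ) ≤ proj v := by
    have := mul_mul_conjTranspose_mono C hR
    rwa [hCR, Matrix.mul_smul, Matrix.mul_one, Matrix.smul_mul] at this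
  obtain ⟨μ, hμ⟩ : ∃ μ : ℂ, c • (C * Cᴴ) = μ • proj v :=
    ⟨_, eq_smul_proj_of_le_proj hv ((posSemidef_self_mul_conjTranspose C).smul hc.le).nonneg hle⟩
  refine ⟨μ⁻¹ * c, ?_⟩
  rw [mul_smul, hμ, smul_smul]
  rcases eq_or_ne μ 0 with rfl | hμ0
  · rw [zero_smul, smul_eq_zero_iff_right hc.ne', self_mul_conjTranspose_eq_zero] at hμ
    rw [← hCR, hμ, Matrix.zero_mul, Matrix.zero_mul, smul_zero]
  · rw [inv_mul_cancel₀ hμ0, one_smul]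

end Proj

lemma exists_product_of_proj_eq_kronecker {a b : Type*} {ψ : a × b → ℂ}
    {X : Matrix a a ℂ} {Y : Matrix b b ℂ} (h : proj ψ = X ⊗ₖ Y) :
    ∃ (f : a → ℂ) (g : b → ℂ), ∀ i j, ψ (i, j) = f i * g j := by
  by_cases hψ : ψ = 0
  · exact ⟨0, 0, fun i j => by simp [hψ]⟩
  obtain ⟨⟨i₀, j₀⟩, hψ₀⟩ := Function.ne_iff.mp hψ
  refine ⟨fun i => X i i₀ / star (ψ (i₀, j₀)), fun j => Y j j₀, fun i j => ?_⟩
  have hij := congrFun (congrFun h (i, j)) (i₀, j₀)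
  simp only [proj, of_apply, kroneckerMap_apply] at hij
  rw [div_mul_eq_mul_div, ← hij, mul_div_cancel_right₀ _ (star_ne_zero.mpr hψ₀)]

theorem no_perfect_distillation {dA dB : ℕ} (hdA : 1 ≤ dA) (hdB : 1 ≤ dB)
    (ψ : Fin dA × Fin dB → ℂ) (hψ : ∑ i, ‖ψ i‖ ^ 2 = 1)
    (hent : ¬ ∃ (a : Fin dA → ℂ) (b : Fin dB → ℂ), ∀ i j, ψ (i, j) = a i * b j)
    (ε : ℝ) (hε0 : 0 < ε) (hε1 : ε < 1) :
    ¬ ∃ (N : ℕ) (A : Matrix (Fin dA) (Fin N → Fin dA) ℂ)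
        (B : Matrix (Fin dB) (Fin N → Fin dB) ℂ),
      (A ⊗ₖ B) *
        ((tensorPow (((1 - ε : ℝ) : ℂ) • proj ψ +
            ((ε / (dA * dB) : ℝ) : ℂ) • (1 : Matrix (Fin dA × Fin dB) (Fin dA × Fin dB) ℂ)) N).submatrix
          (fun p : (Fin N → Fin dA) × (Fin N → Fin dB) => (splitIdx (Fin dA) (Fin dB) N).symm p)
          (fun p : (Fin N → Fin dA) × (Fin N → Fin dB) => (splitIdx (Fin dA) (Fin dB) N).symm p)) *
        (A ⊗ₖ B)ᴴ
      = proj ψ := by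
  rintro ⟨N, A, B, hAB⟩
  have hc : (0 : ℂ) < ((ε / (dA * dB) : ℝ) : ℂ) := by
    have hd : (0 : ℝ) < dA * dB := by exact_mod_cast Nat.mul_pos hdA hdB
    exact Complex.zero_lt_real.mpr (div_pos hε0 hd)
  have hρ : ((ε / (dA * dB) : ℝ) : ℂ) • 1 ≤ ((1 - ε : ℝ) : ℂ) • proj ψ +
      ((ε / (dA * dB) : ℝ) : ℂ) • (1 : Matrix (Fin dA × Fin dB) (Fin dA × Fin dB) ℂ) :=
    le_add_of_nonneg_left ((proj_nonneg ψ).posSemidef.smul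
      (Complex.zero_le_real.mpr (sub_nonneg.mpr hε1.le))).nonneg
  have hψ1 : star ψ ⬝ᵥ ψ = 1 := by
    rw [star_dotProduct_self_eq_sum_norm_sq, hψ, Complex.ofReal_one]
  obtain ⟨t, ht⟩ := exists_proj_eq_smul_mul_conjTranspose hψ1 (pow_pos hc N)
    (smul_one_le_submatrix _ (smul_one_le_tensorPow hc.le hρ N)) hAB
  rw [conjTranspose_kronecker, ← mul_kronecker_mul, ← smul_kronecker] at ht
  exact hent (exists_product_of_proj_eq_kronecker ht)
end
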